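/- Let X be a hermetic metric space and A ⊆ X. Then the following are equivalent: (i) A is a closed set containing no isolated points of X; (ii) there exists a continuous function f : X → ℝ such that ℓ^∞(f) = L^∞(f) = 𝕃^∞(f) = A. -/

import Mathlib

/-!
Since `lip ≤ Lip ≤ 𝕃ip`, it suffices to build a continuous `f` with `lip f = ∞` on `A` that is
locally Lipschitz off `A`; conversely `𝕃^∞(f)` is always closed and misses isolated points.
Take `f = ∑ⱼ fⱼ`, where `fⱼ` is a tent of height `bʲ` and width `32 b²ʲ⁺¹` over a maximal
`b²ʲ`-separated subset of `A`. At distances `b²ʲ` the other scales move `f` by at most `bʲ / 8`,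
while near every `x ∈ A` the tent `fⱼ` moves by `bʲ / 2`: either it is high at `x` and vanishes at
a nearby net point, or `x` is close to a net point and hermeticity provides a point at distance
comparable to `b²ʲ` on the plateau. As the jumps `bʲ` dwarf the distances `b²ʲ`, `lip f = ∞` on
`A`; off `A`, all but finitely many tents are locally constant.
-/

open Metric Set Topology Filter

/-- `Lip^r f(x) = (1/r) · sup_{u ∈ B(x,r)} |f(x) − f(u)|`, with the convention
`sup ∅ = 0`, computed in `[0,∞]`. -/
noncomputable def lipR {X : Type*} [MetricSpace X] (f : X → ℝ) (x : X) (r : ℝ) : ENNReal :=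
  (⨆ u ∈ Metric.ball x r, ENNReal.ofReal |f x - f u|) / ENNReal.ofReal r

/-- The big Lipschitz derivative `Lip f(x) = limsup_{r→0⁺} Lip^r f(x)`. -/
noncomputable def bigLip {X : Type*} [MetricSpace X] (f : X → ℝ) (x : X) : ENNReal :=
  Filter.limsup (lipR f x) (𝓝[>] (0 : ℝ))

/-- The little Lipschitz derivative `lip f(x) = liminf_{r→0⁺} Lip^r f(x)`. -/
noncomputable def litLip {X : Type*} [MetricSpace X] (f : X → ℝ) (x : X) : ENNReal :=
  Filter.liminf (lipR f x) (𝓝[>] (0 : ℝ))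

/-- The local Lipschitz derivative
`𝕃ip f(x) = limsup_{(u,v)→(x,x), u≠v} |f(u) − f(v)| / d(u,v)`. -/
noncomputable def locLip {X : Type*} [MetricSpace X] (f : X → ℝ) (x : X) : ENNReal :=
  Filter.limsup (fun p : X × X => ENNReal.ofReal (|f p.1 - f p.2| / dist p.1 p.2))
    (𝓝[{p : X × X | p.1 ≠ p.2}] (x, x))

/-- The hermeticity of a metric space at a point:
`H(X,x) = liminf_{r→0⁺} (1/r)·sup_{u ∈ B(x,r)} d(u,x)`, in `[0,∞]`. -/
noncomputable def herm {X : Type*} [MetricSpace X] (x : X) : ENNReal :=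
  Filter.liminf (fun r : ℝ =>
    (⨆ u ∈ Metric.ball x r, ENNReal.ofReal (dist u x)) / ENNReal.ofReal r) (𝓝[>] (0 : ℝ))

/-- The hermeticity of a metric space: `H(X) = inf_{x ∈ X^d} H(X,x)`, the
infimum being taken over all non-isolated points of `X`. `X` is hermetic if
`H(X) > 0`. -/
noncomputable def hermSpace (X : Type*) [MetricSpace X] : ENNReal :=
  ⨅ x : {x : X // ¬ IsOpen ({x} : Set X)}, herm x.1

open scoped NNReal ENNReal

section LipschitzDerivatives

variable {X : Type*} [MetricSpace X] {f : X → ℝ} {x : X}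

theorem litLip_le_bigLip : litLip f x ≤ bigLip f x := liminf_le_limsup

theorem ofReal_div_le_lipR {r : ℝ} (hr : 0 < r) {u : X} (hu : u ∈ ball x r) :
    ENNReal.ofReal (|f x - f u| / r) ≤ lipR f x r := by
  rw [lipR, ENNReal.ofReal_div_of_pos hr]
  exact ENNReal.div_le_div_right (le_biSup (fun u => ENNReal.ofReal |f x - f u|) hu) _

theorem lipR_le_of_lipschitzOnWith {K : ℝ≥0} {ε r : ℝ} (hf : LipschitzOnWith K f (ball x ε))
    (hr : 0 < r) (hrε : r ≤ ε) : lipR f x r ≤ K := by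
  refine ENNReal.div_le_of_le_mul (iSup₂_le fun u hu => ?_)
  rw [← ENNReal.ofReal_coe_nnreal, ← ENNReal.ofReal_mul K.coe_nonneg]
  refine ENNReal.ofReal_le_ofReal ?_
  calc |f x - f u| = dist (f x) (f u) := (Real.dist_eq _ _).symm
    _ ≤ K * dist x u :=
      hf.dist_le_mul x (mem_ball_self (hr.trans_le hrε)) u (ball_subset_ball hrε hu)
    _ ≤ K * r := by gcongr; exact mem_ball'.1 hu |>.le

theorem bigLip_le_of_lipschitzOnWith {K : ℝ≥0} {ε : ℝ} (hε : 0 < ε)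
    (hf : LipschitzOnWith K f (ball x ε)) : bigLip f x ≤ K :=
  limsup_le_of_le (by isBoundedDefault) <| by
    filter_upwards [Ioc_mem_nhdsGT hε] with r hr using lipR_le_of_lipschitzOnWith hf hr.1 hr.2

theorem locLip_le_of_lipschitzOnWith {K : ℝ≥0} {ε : ℝ} (hε : 0 < ε)
    (hf : LipschitzOnWith K f (ball x ε)) : locLip f x ≤ K := by
  refine limsup_le_of_le (by isBoundedDefault) ?_
  filter_upwards [nhdsWithin_le_nhds (prod_mem_nhds (ball_mem_nhds x hε) (ball_mem_nhds x hε))]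
    with p hp
  rw [← ENNReal.ofReal_coe_nnreal]
  refine ENNReal.ofReal_le_ofReal (div_le_of_le_mul₀ dist_nonneg K.2 ?_)
  rw [← Real.dist_eq]
  exact hf.dist_le_mul _ hp.1 _ hp.2

theorem exists_lipschitzOnWith_of_locLip_lt {K : ℝ≥0} (h : locLip f x < K) :
    ∃ ε > 0, LipschitzOnWith K f (ball x ε) := by
  have hev := eventually_lt_of_limsup_lt h (by isBoundedDefault)
  obtain ⟨ε, hε, hball⟩ := Metric.eventually_nhds_iff_ball.1 (eventually_nhdsWithin_iff.1 hev)
  refine ⟨ε, hε, LipschitzOnWith.of_dist_le_mul fun u hu v hv => ?_⟩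
  rcases eq_or_ne u v with rfl | huv
  · simp
  have hlt := hball (u, v) (ball_prod_same x x ε ▸ ⟨hu, hv⟩) huv
  rw [ENNReal.ofReal_lt_coe_iff (div_nonneg (abs_nonneg _) dist_nonneg),
    div_lt_iff₀ (dist_pos.2 huv)] at hlt
  rw [Real.dist_eq]
  exact hlt.le

theorem bigLip_le_locLip : bigLip f x ≤ locLip f x := by
  refine le_of_forall_gt fun c hc => ?_
  obtain ⟨K, hK, hKc⟩ := ENNReal.lt_iff_exists_nnreal_btwn.1 hc
  obtain ⟨ε, hε, hf⟩ := exists_lipschitzOnWith_of_locLip_lt hK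
  exact (bigLip_le_of_lipschitzOnWith hε hf).trans_lt hKc

theorem locLip_eq_zero_of_isOpen_singleton (h : IsOpen ({x} : Set X)) : locLip f x = 0 := by
  have hbot : 𝓝[{p : X × X | p.1 ≠ p.2}] (x, x) = ⊥ := by
    rw [← empty_mem_iff_bot, mem_nhdsWithin_iff_exists_mem_nhds_inter]
    exact ⟨{x} ×ˢ {x}, prod_mem_nhds (h.mem_nhds rfl) (h.mem_nhds rfl),
      fun p ⟨⟨h₁, h₂⟩, hne⟩ => hne (h₁.trans h₂.symm)⟩
  rw [locLip, hbot, limsup_bot]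
  rfl

theorem isClosed_setOf_locLip_eq_top (f : X → ℝ) : IsClosed {x : X | locLip f x = ⊤} := by
  refine isOpen_compl_iff.1 (Metric.isOpen_iff.2 fun x hx => ?_)
  obtain ⟨K, hK, -⟩ := ENNReal.lt_iff_exists_nnreal_btwn.1 (lt_top_iff_ne_top.2 hx)
  obtain ⟨ε, hε, hf⟩ := exists_lipschitzOnWith_of_locLip_lt hK
  refine ⟨ε / 2, half_pos hε, fun y hy => ne_top_of_le_ne_top (ENNReal.coe_ne_top (r := K)) ?_⟩
  refine locLip_le_of_lipschitzOnWith (half_pos hε) (hf.mono (ball_subset_ball' ?_))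
  linarith [mem_ball.1 hy]

theorem litLip_eq_top_of_jumps {b κ : ℝ} (hb0 : 0 < b) (hb1 : b < 1) (hκ : 0 < κ)
    (h : ∀ᶠ j in atTop, ∃ u, dist u x ≤ b ^ (2 * j) ∧ κ * b ^ j ≤ |f x - f u|) :
    litLip f x = ⊤ := by
  refine ENNReal.eq_top_of_forall_nnreal_le fun M => le_liminf_of_le (by isBoundedDefault) ?_
  have hsmall : ∀ᶠ j in atTop, M * b ^ j < κ * b := by
    have := (tendsto_pow_atTop_nhds_zero_of_lt_one hb0.le hb1).const_mul (M : ℝ)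
    rw [mul_zero] at this
    exact this.eventually (gt_mem_nhds (mul_pos hκ hb0))
  obtain ⟨j₀, hj₀⟩ := eventually_atTop.1 ((tendsto_add_atTop_nat 1).eventually h |>.and hsmall)
  have hb2 : 0 < b ^ 2 := pow_pos hb0 2
  have hb21 : b ^ 2 < 1 := pow_lt_one₀ hb0.le hb1 two_ne_zero
  filter_upwards [Ioo_mem_nhdsGT (pow_pos hb2 j₀)] with r ⟨hr0, hr⟩
  obtain ⟨n, hn1, hn2⟩ :=
    exists_nat_pow_near_of_lt_one hr0 (hr.le.trans (pow_le_one₀ hb2.le hb21.le)) hb2 hb21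
  have hn : j₀ ≤ n := by
    by_contra! hn
    exact (hn1.trans hr).not_ge (pow_le_pow_of_le_one hb2.le hb21.le hn)
  obtain ⟨⟨u, hu, hjump⟩, hMb⟩ := hj₀ n hn
  rw [← pow_mul] at hn1 hn2
  have hur : u ∈ ball x r := mem_ball.2 (hu.trans_lt hn1)
  refine (ENNReal.ofReal_coe_nnreal.symm.trans_le ?_).trans (ofReal_div_le_lipR hr0 hur)
  refine ENNReal.ofReal_le_ofReal ((le_div_iff₀ hr0).2 ?_)
  calc (M : ℝ) * r ≤ M * b ^ n * b ^ n := by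
        rw [mul_assoc, ← pow_add, ← two_mul]; exact mul_le_mul_of_nonneg_left hn2 M.2
    _ ≤ κ * b * b ^ n := by gcongr
    _ = κ * b ^ (n + 1) := by ring
    _ ≤ |f x - f u| := hjump

theorem setOf_lip_eq_top_eq_of_subset {A : Set X} (hlit : ∀ x ∈ A, litLip f x = ⊤)
    (hloc : ∀ x ∉ A, locLip f x ≠ ⊤) :
    {x | litLip f x = ⊤} = A ∧ {x | bigLip f x = ⊤} = A ∧ {x | locLip f x = ⊤} = A := by
  have h₁ : A ⊆ {x | litLip f x = ⊤} := hlit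
  have h₂ : {x | litLip f x = ⊤} ⊆ {x | bigLip f x = ⊤} := fun x hx =>
    top_le_iff.1 (hx.symm.trans_le litLip_le_bigLip)
  have h₃ : {x | bigLip f x = ⊤} ⊆ {x | locLip f x = ⊤} := fun x hx =>
    top_le_iff.1 (hx.symm.trans_le bigLip_le_locLip)
  have h₄ : {x | locLip f x = ⊤} ⊆ A := fun x hx => by_contra fun hxA => hloc x hxA hx
  exact ⟨(h₂.trans (h₃.trans h₄)).antisymm h₁, (h₃.trans h₄).antisymm (h₁.trans h₂),
    h₄.antisymm (h₁.trans (h₂.trans h₃))⟩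

end LipschitzDerivatives

theorem eventually_exists_mul_lt_dist_of_lt_herm {X : Type*} [MetricSpace X] {x : X} {c : ℝ≥0}
    (hc : (c : ℝ≥0∞) < herm x) :
    ∀ᶠ r in 𝓝[>] (0 : ℝ), ∃ y, dist y x < r ∧ c * r < dist y x := by
  filter_upwards [eventually_lt_of_lt_liminf hc (by isBoundedDefault), self_mem_nhdsWithin]
    with r hr hr0
  rw [ENNReal.lt_div_iff_mul_lt (Or.inl (ENNReal.ofReal_pos.2 hr0).ne')
    (Or.inl ENNReal.ofReal_ne_top), ← ENNReal.ofReal_coe_nnreal,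
    ← ENNReal.ofReal_mul c.coe_nonneg] at hr
  obtain ⟨y, hy, hlt⟩ := lt_biSup_iff.1 hr
  exact ⟨y, hy, (ENNReal.ofReal_lt_ofReal_iff'.1 hlt).1⟩

theorem exists_separated_net {X : Type*} [MetricSpace X] {R : ℝ} (hR : 0 ≤ R) (s : Set X) :
    ∃ N ⊆ s, N.Pairwise (fun p q => R ≤ dist p q) ∧ ∀ x ∈ s, ∃ p ∈ N, dist x p ≤ R := by
  obtain ⟨N, hN⟩ := zorn_subset {N | N ⊆ s ∧ IsSeparated (ENNReal.ofReal R) N} fun c hcS hc =>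
    ⟨⋃₀ c, ⟨sUnion_subset fun t ht => (hcS ht).1, hc.pairwise_sUnion.2 fun t ht => (hcS ht).2⟩,
      fun _ => subset_sUnion_of_mem⟩
  refine ⟨N, hN.prop.1, fun p hp q hq hpq => ?_, fun x hx => ?_⟩
  · exact (ENNReal.ofReal_lt_ofReal_iff'.1 (edist_dist p q ▸ hN.prop.2 hp hq hpq)).1.le
  · obtain ⟨p, hp, hxp⟩ := IsCover.of_maximal_isSeparated (ε := R.toNNReal) hN hx
    exact ⟨p, hp, (ENNReal.ofReal_le_ofReal_iff hR).1 (edist_dist x p ▸ hxp)⟩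

section Tent

variable {X : Type*} [MetricSpace X] {N : Set X} {w h : ℝ}

noncomputable def tent (N : Set X) (w h : ℝ) (u : X) : ℝ := h / w * min (infDist u N) w

theorem continuous_tent : Continuous (tent N w h) :=
  continuous_const.mul ((continuous_infDist_pt N).min continuous_const)

theorem tent_nonneg (hw : 0 ≤ w) (hh : 0 ≤ h) (u : X) : 0 ≤ tent N w h u :=
  mul_nonneg (div_nonneg hh hw) (le_min infDist_nonneg hw)

theorem tent_le (hw : 0 < w) (hh : 0 ≤ h) (u : X) : tent N w h u ≤ h :=
  calc tent N w h u ≤ h / w * w :=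
        mul_le_mul_of_nonneg_left (min_le_right _ _) (div_nonneg hh hw.le)
    _ = h := div_mul_cancel₀ h hw.ne'

theorem tent_eq_zero_of_mem (hw : 0 ≤ w) {u : X} (hu : u ∈ N) : tent N w h u = 0 := by
  rw [tent, infDist_zero_of_mem hu, min_eq_left hw, mul_zero]

theorem tent_eq_of_le_infDist (hw : 0 < w) {u : X} (hu : w ≤ infDist u N) : tent N w h u = h := by
  rw [tent, min_eq_right hu, div_mul_cancel₀ h hw.ne']

theorem abs_tent_sub_tent_le (hw : 0 < w) (hh : 0 ≤ h) (u v : X) :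
    |tent N w h u - tent N w h v| ≤ h / w * dist u v := by
  rw [tent, tent, ← mul_sub, abs_mul, abs_of_nonneg (div_nonneg hh hw.le)]
  gcongr
  refine (abs_min_sub_min_le_max _ _ _ _).trans ?_
  rw [sub_self, abs_zero, max_eq_left (abs_nonneg _), ← Real.dist_eq]
  exact (lipschitz_infDist_pt (s := N)).dist_le_mul u v |>.trans_eq (by simp)

theorem exists_abs_tent_sub_ge {R : ℝ} (hw : 0 < w) (hh : 0 ≤ h)
    (hsep : N.Pairwise (fun p q => R ≤ dist p q)) {x y : X} (hx : ∃ p ∈ N, dist x p ≤ R)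
    (hy : 2 * w ≤ dist y x) (hy' : dist y x ≤ R / 4) :
    ∃ u, dist u x ≤ R ∧ h / 2 ≤ |tent N w h x - tent N w h u| := by
  obtain ⟨p, hpN, hxp⟩ := hx
  by_cases hhigh : h / 2 ≤ tent N w h x
  · refine ⟨p, dist_comm p x ▸ hxp, ?_⟩
    rwa [tent_eq_zero_of_mem hw.le hpN, sub_zero, abs_of_nonneg (tent_nonneg hw.le hh x)]
  have hxN : infDist x N < w / 2 := by
    by_contra! hfar
    refine hhigh ((le_of_eq ?_).trans (mul_le_mul_of_nonneg_left (le_min hfar (by linarith))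
      (div_nonneg hh hw.le)))
    field_simp
  obtain ⟨p₀, hp₀N, hxp₀⟩ := (infDist_lt_iff ⟨p, hpN⟩).1 hxN
  have hyN : w ≤ infDist y N := by
    by_contra! hnear
    obtain ⟨q, hqN, hyq⟩ := (infDist_lt_iff ⟨p, hpN⟩).1 hnear
    rcases eq_or_ne p₀ q with rfl | hne
    · linarith [dist_triangle y p₀ x, dist_comm x p₀]
    · linarith [hsep hp₀N hqN hne, dist_triangle4 p₀ x y q, dist_comm x p₀, dist_comm x y,
        dist_comm y q]
  refine ⟨y, by linarith, ?_⟩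
  rw [tent_eq_of_le_infDist hw hyN, abs_sub_comm, abs_of_nonneg (by linarith)]
  linarith

end Tent

theorem abs_tsum_sub_le_of_abs_le_pow {D : ℕ → ℝ} {b : ℝ} (hb0 : 0 ≤ b) (hb1 : b < 1)
    (hD : ∀ i, |D i| ≤ b ^ i) (j : ℕ) :
    |∑' i, D i - D j| ≤ ∑ i ∈ Finset.range j, |D i| + b ^ (j + 1) / (1 - b) := by
  have hs : Summable D := .of_norm_bounded (summable_geometric_of_lt_one hb0 hb1) hD
  have htail : HasSum (fun i => b ^ (i + (j + 1))) (b ^ (j + 1) / (1 - b)) := by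
    simpa [pow_add, mul_comm, div_eq_mul_inv] using
      (hasSum_geometric_of_lt_one hb0 hb1).mul_left (b ^ (j + 1))
  have hsplit : ∑' i, D i - D j = ∑ i ∈ Finset.range j, D i + ∑' i, D (i + (j + 1)) := by
    rw [← hs.sum_add_tsum_nat_add (j + 1), Finset.sum_range_succ]
    ring
  have htail' : |∑' i, D (i + (j + 1))| ≤ b ^ (j + 1) / (1 - b) :=
    tsum_of_norm_bounded (f := fun i => D (i + (j + 1))) htail fun i => hD _
  rw [hsplit]
  exact (abs_add_le _ _).trans (add_le_add (Finset.abs_sum_le_sum_abs _ _) htail')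

theorem sum_range_inv_pow_le {b : ℝ} (hb0 : 0 < b) (hb : b ≤ 1 / 2) (j : ℕ) :
    ∑ i ∈ Finset.range j, (b ^ i)⁻¹ ≤ 2 * b * (b ^ j)⁻¹ := by
  induction j with
  | zero => simp; positivity
  | succ j ih =>
    have hj : 2 * b * (b ^ (j + 1))⁻¹ = 2 * (b ^ j)⁻¹ := by field_simp; ring
    have : 0 ≤ (b ^ j)⁻¹ := by positivity
    rw [Finset.sum_range_succ, hj]
    nlinarith

section TentSeries

variable {X : Type*} [MetricSpace X] {b : ℝ} {N : ℕ → Set X}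

/-- The factor `32 * b` in the width makes the slopes of the coarser scales add up to at most
`b ^ j / 16` over distances `b ^ (2 * j)`. -/
noncomputable def scaleTent (b : ℝ) (N : ℕ → Set X) (j : ℕ) : X → ℝ :=
  tent (N j) (32 * b ^ (2 * j + 1)) (b ^ j)

noncomputable def tentSeries (b : ℝ) (N : ℕ → Set X) (u : X) : ℝ := ∑' j, scaleTent b N j u

theorem abs_scaleTent_sub_le_pow (hb0 : 0 < b) (j : ℕ) (u v : X) :
    |scaleTent b N j u - scaleTent b N j v| ≤ b ^ j :=
  abs_sub_le_of_nonneg_of_le (tent_nonneg (by positivity) (by positivity) u)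
    (tent_le (by positivity) (by positivity) u) (tent_nonneg (by positivity) (by positivity) v)
    (tent_le (by positivity) (by positivity) v)

theorem abs_scaleTent_sub_le_dist (hb0 : 0 < b) (j : ℕ) (u v : X) :
    |scaleTent b N j u - scaleTent b N j v| ≤ (32 * b)⁻¹ * (b ^ j)⁻¹ * dist u v := by
  refine (abs_tent_sub_tent_le (by positivity) (by positivity) u v).trans_eq ?_
  field_simp
  ring

theorem summable_scaleTent (hb0 : 0 < b) (hb1 : b < 1) (u : X) :
    Summable fun j => scaleTent b N j u :=
  .of_nonneg_of_le (fun j => tent_nonneg (by positivity) (by positivity) u)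
    (fun j => tent_le (by positivity) (by positivity) u) (summable_geometric_of_lt_one hb0.le hb1)

theorem continuous_tentSeries (hb0 : 0 < b) (hb1 : b < 1) : Continuous (tentSeries b N) :=
  continuous_tsum (fun _ => continuous_tent) (summable_geometric_of_lt_one hb0.le hb1)
    fun j u => by
      rw [Real.norm_eq_abs]
      exact (abs_of_nonneg (tent_nonneg (by positivity) (by positivity) u)).trans_le
        (tent_le (by positivity) (by positivity) u)

theorem tentSeries_sub (hb0 : 0 < b) (hb1 : b < 1) (u v : X) :
    tentSeries b N u - tentSeries b N v = ∑' j, (scaleTent b N j u - scaleTent b N j v) :=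
  ((summable_scaleTent hb0 hb1 u).tsum_sub (summable_scaleTent hb0 hb1 v)).symm

theorem abs_tentSeries_sub_sub_scaleTent_le (hb0 : 0 < b) (hb : b ≤ 1 / 32) {j : ℕ} {u v : X}
    (huv : dist u v ≤ b ^ (2 * j)) :
    |(tentSeries b N u - tentSeries b N v) - (scaleTent b N j u - scaleTent b N j v)| ≤
      b ^ j / 8 := by
  have hb1 : b < 1 := by linarith
  rw [tentSeries_sub hb0 hb1]
  refine (abs_tsum_sub_le_of_abs_le_pow hb0.le hb1
    (fun i => abs_scaleTent_sub_le_pow hb0 i u v) j).trans ?_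
  have hhead : ∑ i ∈ Finset.range j, |scaleTent b N i u - scaleTent b N i v| ≤ b ^ j / 16 :=
    calc ∑ i ∈ Finset.range j, |scaleTent b N i u - scaleTent b N i v|
        ≤ ∑ i ∈ Finset.range j, (32 * b)⁻¹ * b ^ (2 * j) * (b ^ i)⁻¹ :=
          Finset.sum_le_sum fun i _ =>
            (abs_scaleTent_sub_le_dist hb0 i u v).trans (by rw [mul_right_comm]; gcongr)
      _ = (32 * b)⁻¹ * b ^ (2 * j) * ∑ i ∈ Finset.range j, (b ^ i)⁻¹ := by
          rw [Finset.mul_sum]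
      _ ≤ (32 * b)⁻¹ * b ^ (2 * j) * (2 * b * (b ^ j)⁻¹) := by
          gcongr; exact sum_range_inv_pow_le hb0 (by linarith) j
      _ = b ^ j / 16 := by field_simp; ring
  have htail : b ^ (j + 1) / (1 - b) ≤ b ^ j / 16 := by
    rw [div_le_iff₀ (by linarith), pow_succ]
    nlinarith [pow_pos hb0 j]
  linarith

theorem exists_abs_tentSeries_sub_ge (hb0 : 0 < b) (hb : b ≤ 1 / 32) {j : ℕ}
    (hsep : (N j).Pairwise (fun p q => b ^ (2 * j) ≤ dist p q)) {x y : X}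
    (hx : ∃ p ∈ N j, dist x p ≤ b ^ (2 * j)) (hy : 64 * b ^ (2 * j + 1) ≤ dist y x)
    (hy' : dist y x ≤ b ^ (2 * j) / 4) :
    ∃ u, dist u x ≤ b ^ (2 * j) ∧ b ^ j / 4 ≤ |tentSeries b N x - tentSeries b N u| := by
  obtain ⟨u, hux, hjump⟩ :=
    exists_abs_tent_sub_ge (w := 32 * b ^ (2 * j + 1)) (by positivity) (pow_nonneg hb0.le j) hsep
      hx (by linarith) hy'
  have hjump' : b ^ j / 2 ≤ |scaleTent b N j x - scaleTent b N j u| := hjump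
  have herr := abs_tentSeries_sub_sub_scaleTent_le (N := N) hb0 hb (dist_comm x u ▸ hux)
  refine ⟨u, hux, ?_⟩
  linarith [abs_sub_abs_le_abs_sub (scaleTent b N j x - scaleTent b N j u)
    (tentSeries b N x - tentSeries b N u), abs_sub_comm (scaleTent b N j x - scaleTent b N j u)
    (tentSeries b N x - tentSeries b N u), pow_pos hb0 j]

theorem exists_lipschitzOnWith_tentSeries (hb0 : 0 < b) (hb1 : b < 1) {A : Set X}
    (hA : IsClosed A) (hNA : ∀ j, N j ⊆ A) (hN : ∀ j, (N j).Nonempty) {x : X} (hx : x ∉ A) :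
    ∃ ε > 0, ∃ K, LipschitzOnWith K (tentSeries b N) (ball x ε) := by
  set ρ := infDist x A / 2 with hρdef
  have hρ : 0 < ρ := half_pos ((hA.notMem_iff_infDist_pos ((hN 0).mono (hNA 0))).1 hx)
  obtain ⟨J, hJ⟩ := exists_pow_lt_of_lt_one (div_pos hρ (by norm_num : (0 : ℝ) < 32)) hb1
  have hflat : ∀ j ≥ J, ∀ z ∈ ball x ρ, scaleTent b N j z = b ^ j := fun j hj z hz => by
    refine tent_eq_of_le_infDist (by positivity) ?_
    calc 32 * b ^ (2 * j + 1) ≤ 32 * b ^ J :=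
          mul_le_mul_of_nonneg_left (pow_le_pow_of_le_one hb0.le hb1.le (by omega)) (by norm_num)
      _ ≤ ρ := by linarith
      _ ≤ infDist z A := by
          linarith [infDist_le_infDist_add_dist (x := x) (y := z) (s := A), mem_ball'.1 hz, hρdef]
      _ ≤ infDist z (N j) := infDist_le_infDist_of_subset (hNA j) (hN j)
  refine ⟨ρ, hρ, _, LipschitzOnWith.of_dist_le'
    (K := ∑ j ∈ Finset.range J, (32 * b)⁻¹ * (b ^ j)⁻¹) fun u hu v hv => ?_⟩
  rw [Real.dist_eq, tentSeries_sub hb0 hb1, tsum_eq_sum (s := Finset.range J) fun j hj => by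
    rw [hflat j (by simpa using hj) u hu, hflat j (by simpa using hj) v hv, sub_self],
    Finset.sum_mul]
  exact (Finset.abs_sum_le_sum_abs _ _).trans
    (Finset.sum_le_sum fun j _ => abs_scaleTent_sub_le_dist hb0 j u v)

end TentSeries

theorem exists_continuous_litLip_eq_top_locLip_ne_top {X : Type*} [MetricSpace X] {A : Set X}
    (hA : IsClosed A) {c : ℝ} (hc0 : 0 < c)
    (hfar : ∀ x ∈ A, ∀ᶠ r in 𝓝[>] (0 : ℝ), ∃ y, dist y x < r ∧ c * r ≤ dist y x) :
    ∃ f : X → ℝ, Continuous f ∧ (∀ x ∈ A, litLip f x = ⊤) ∧ ∀ x ∉ A, locLip f x ≠ ⊤ := by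
  rcases A.eq_empty_or_nonempty with rfl | hAne
  · exact ⟨0, continuous_const, by simp, fun x _ => ne_top_of_le_ne_top ENNReal.coe_ne_top
      (locLip_le_of_lipschitzOnWith one_pos
        ((LipschitzWith.const 0).lipschitzOnWith (s := ball x 1)))⟩
  set b := min c 1 / 256 with hbc
  have hb0 : 0 < b := by positivity
  have hb : b ≤ 1 / 32 := by linarith [min_le_right c 1]
  have hb1 : b < 1 := by linarith
  choose N hNA hsep hcov using fun j : ℕ => exists_separated_net (by positivity : 0 ≤ b ^ (2 * j)) A
  refine ⟨tentSeries b N, continuous_tentSeries hb0 hb1, fun x hx => ?_, fun x hx => ?_⟩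
  · have hscale : Tendsto (fun j : ℕ => b ^ (2 * j) / 4) atTop (𝓝[>] 0) := by
      refine tendsto_nhdsWithin_iff.2 ⟨?_, .of_forall fun j => mem_Ioi.2 (by positivity)⟩
      have hb2 : b ^ 2 < 1 := by nlinarith
      simpa [pow_mul] using (tendsto_pow_atTop_nhds_zero_of_lt_one (by positivity) hb2).div_const 4
    refine litLip_eq_top_of_jumps hb0 hb1 (by norm_num : (0 : ℝ) < 1 / 4) ?_
    filter_upwards [hscale.eventually (hfar x hx)] with j ⟨y, hy, hcy⟩
    have hy' : 64 * b ^ (2 * j + 1) ≤ dist y x :=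
      calc 64 * b ^ (2 * j + 1) = min c 1 * (b ^ (2 * j) / 4) := by rw [pow_succ, hbc]; ring
        _ ≤ c * (b ^ (2 * j) / 4) := by gcongr; exact min_le_left c 1
        _ ≤ dist y x := hcy
    obtain ⟨u, hux, hjump⟩ := exists_abs_tentSeries_sub_ge hb0 hb (hsep j) (hcov j x hx) hy' hy.le
    exact ⟨u, hux, by linarith⟩
  · obtain ⟨ε, hε, K, hK⟩ := exists_lipschitzOnWith_tentSeries hb0 hb1 hA hNA
      (fun j => (hcov j _ hAne.some_mem).imp fun _ h => h.1) hx
    exact ne_top_of_le_ne_top ENNReal.coe_ne_top (locLip_le_of_lipschitzOnWith hε hK)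

/-- For a hermetic metric space `X` and `A ⊆ X`, the following are equivalent:
(i) `A` is closed and contains no isolated points of `X`;
(ii) there is a continuous `f : X → ℝ` with `ℓ^∞(f) = L^∞(f) = 𝕃^∞(f) = A`. -/
theorem closed_no_isolated_iff_exists_three_lip {X : Type*} [MetricSpace X]
    (hX : 0 < hermSpace X) (A : Set X) :
    (IsClosed A ∧ ∀ x ∈ A, ¬ IsOpen ({x} : Set X)) ↔
      ∃ f : X → ℝ, Continuous f ∧
        {x : X | litLip f x = ⊤} = A ∧ {x : X | bigLip f x = ⊤} = A ∧
          {x : X | locLip f x = ⊤} = A := by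
  constructor
  · rintro ⟨hA, hAiso⟩
    obtain ⟨c, hc0, hc⟩ := ENNReal.lt_iff_exists_nnreal_btwn.1 hX
    have hfar : ∀ x ∈ A, ∀ᶠ r in 𝓝[>] (0 : ℝ), ∃ y, dist y x < r ∧ c * r ≤ dist y x :=
      fun x hx => (eventually_exists_mul_lt_dist_of_lt_herm
        (hc.trans_le (iInf_le _ ⟨x, hAiso x hx⟩))).mono fun _ ⟨y, hy, hcy⟩ => ⟨y, hy, hcy.le⟩
    obtain ⟨f, hf, hlit, hloc⟩ :=
      exists_continuous_litLip_eq_top_locLip_ne_top hA (by exact_mod_cast hc0) hfar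
    exact ⟨f, hf, setOf_lip_eq_top_eq_of_subset hlit hloc⟩
  · rintro ⟨f, -, -, -, hloc⟩
    refine ⟨hloc ▸ isClosed_setOf_locLip_eq_top f, fun x hx hiso => ?_⟩
    have htop : locLip f x = ⊤ := by rwa [← hloc] at hx
    exact ENNReal.zero_ne_top ((locLip_eq_zero_of_isOpen_singleton hiso).symm.trans htop)
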